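/- Let 0 → A →f B →g C → 0 be a u-S-split short exact sequence of R-modules. If B is u-S-projective, then both A and C are u-S-projective. -/

import Mathlib

/-!
Ext is `R`-linear in its first argument, being derived from the `R`-linear functor
`Hom(-, M)`; so `s • 𝟙 X` induces multiplication by `s` on `Ext^n(X, M)`. Hence if
`p ∘ i = s • id` for `i : X → Y`, multiplication by `s` on `Ext^n(X, M)` factors through
`Ext^n(Y, M)`, and `X` inherits u-`S`-projectivity from `Y`. For `A` take `i = f`, `p = f'`.
For `C`, the map `s • id - f ∘ f'` vanishes on `ker g = range f`, so it descends along `g`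
to `q : C → B` with `g ∘ q = s • id`.
-/

open CategoryTheory

universe u

def IsUSTorsionMod {R : Type u} [CommRing R] (S : Submonoid R) (X : ModuleCat.{u} R) : Prop :=
  ∃ s ∈ S, ∀ x : X, s • x = 0

def IsUSTorsion {R : Type u} [CommRing R] (S : Submonoid R) (T : Type u)
    [AddCommGroup T] [Module R T] : Prop :=
  ∃ s ∈ S, ∀ x : T, s • x = 0

noncomputable def ext (R : Type u) [CommRing R] (n : ℕ) (P M : ModuleCat.{u} R) :
    ModuleCat.{u} R :=
  ((Ext R (ModuleCat.{u} R) n).obj (Opposite.op P)).obj M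

def IsUSProjective {R : Type u} [CommRing R] (S : Submonoid R) (P : Type u)
    [AddCommGroup P] [Module R P] : Prop :=
  ∀ M : ModuleCat.{u} R, IsUSTorsionMod S (ext R 1 (ModuleCat.of R P) M)

def IsUSInjective {R : Type u} [CommRing R] (S : Submonoid R) (E : Type u)
    [AddCommGroup E] [Module R E] : Prop :=
  ∀ M : ModuleCat.{u} R, IsUSTorsionMod S (ext R 1 M (ModuleCat.of R E))


section Opposite
variable {R : Type*} [Ring R] {C : Type*} [Category* C] [Preadditive C]
  [CategoryTheory.Linear R C]

instance (X Y : Cᵒᵖ) : SMul R (X ⟶ Y) := ⟨fun r f => (r • f.unop).op⟩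

instance CategoryTheory.Linear.opposite : Linear R Cᵒᵖ where
  homModule X Y := Function.Injective.module R (unopHom X Y) Quiver.Hom.unop_inj
    fun _ _ => rfl
  smul_comp _ _ _ r f g := Quiver.Hom.unop_inj (Linear.comp_smul _ _ _ g.unop r f.unop)
  comp_smul _ _ _ f r g := Quiver.Hom.unop_inj (Linear.smul_comp _ _ _ r g.unop f.unop)

instance CategoryTheory.Functor.rightOp_linear {D : Type*} [Category* D] [Preadditive D]
    [CategoryTheory.Linear R D] (F : Cᵒᵖ ⥤ D) [F.Linear R] : F.rightOp.Linear R where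
  map_smul f r := Quiver.Hom.unop_inj (F.map_smul r f.op)

end Opposite

instance CategoryTheory.linearYoneda_obj_linear {R : Type*} [CommRing R] {C : Type*}
    [Category* C] [Preadditive C] [Linear R C] (X : C) : ((linearYoneda R C).obj X).Linear R where
  map_smul f r := by
    ext u
    exact Linear.smul_comp _ _ _ r f.unop u

section Homology
variable {R : Type*} [Ring R] {C : Type*} [Category* C] [Abelian C] [Linear R C]
  {ι : Type*} (c : ComplexShape ι)

instance HomologicalComplex.shortComplexFunctor_linear (i : ι) :
    (HomologicalComplex.shortComplexFunctor C c i).Linear R where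

instance HomologicalComplex.homologyFunctor_linear (i : ι) :
    (HomologicalComplex.homologyFunctor C c i).Linear R :=
  Functor.linear_of_iso R (HomologicalComplex.homologyFunctorIso C c i).symm

instance HomotopyCategory.homologyFunctor_linear (i : ι) :
    (HomotopyCategory.homologyFunctor C c i).Linear R := by
  have := Functor.linear_of_iso R (HomotopyCategory.homologyFunctorFactors C c i).symm
  exact Functor.linear_of_full_essSurj_comp (HomotopyCategory.quotient C c) _

end Homology

section Derived
variable {R : Type*} [Ring R] {C : Type*} [Category* C] [Abelian C] [CategoryTheory.Linear R C]
  [HasProjectiveResolutions C]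

instance CategoryTheory.projectiveResolutions_linear : (projectiveResolutions C).Linear R where
  map_smul {X Y} f r := by
    change (HomotopyCategory.quotient _ _).map (ProjectiveResolution.lift (r • f) _ _) =
      r • (HomotopyCategory.quotient _ _).map (ProjectiveResolution.lift f _ _)
    rw [← Functor.map_smul]
    apply HomotopyCategory.eq_of_homotopy
    apply ProjectiveResolution.liftHomotopy (r • f)
    · exact ProjectiveResolution.lift_commutes _ _ _
    · apply HomologicalComplex.to_single_hom_ext
      simp only [HomologicalComplex.comp_f, HomologicalComplex.smul_f_apply, Linear.smul_comp,
        ProjectiveResolution.lift_commutes, ChainComplex.single₀_obj_zero,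
        ChainComplex.single₀_map_f_zero]
      exact (Linear.comp_smul _ _ _ _ _ _).symm

variable {D : Type*} [Category* D] [Abelian D] [CategoryTheory.Linear R D]

instance CategoryTheory.Functor.leftDerived_linear (F : C ⥤ D) [F.Additive] [F.Linear R]
    (n : ℕ) : (F.leftDerived n).Linear R := by
  dsimp only [Functor.leftDerived, Functor.leftDerivedToHomotopyCategory]
  infer_instance

end Derived

lemma Ext_map_smul {R : Type*} [CommRing R] {C : Type*} [Category* C] [Abelian C]
    [Linear R C] [EnoughProjectives C] (n : ℕ) {X X' : C} (f : X ⟶ X') (r : R) (Y : C) :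
    ((Ext R C n).map (r • f).op).app Y = r • ((Ext R C n).map f.op).app Y :=
  congrArg Quiver.Hom.unop
    ((((linearYoneda R C).obj Y).rightOp.leftDerived n).map_smul r f)

lemma LinearMap.exists_comp_eq_smul_id_of_range_eq_ker {R : Type*} [CommRing R]
    {A B C : Type*} [AddCommGroup A] [Module R A] [AddCommGroup B] [Module R B]
    [AddCommGroup C] [Module R C] {f : A →ₗ[R] B} {g : B →ₗ[R] C}
    (hg : Function.Surjective g) (hfg : range f = ker g) {s : R} {f' : B →ₗ[R] A}
    (hf' : f' ∘ₗ f = s • id) : ∃ q : C →ₗ[R] B, g ∘ₗ q = s • id := by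
  set h : B →ₗ[R] B := s • id - f ∘ₗ f'
  have hgh : g ∘ₗ h = s • g := by
    have hgf : g ∘ₗ f = 0 := range_le_ker_iff.mp hfg.le
    rw [comp_sub, comp_smul, comp_id, ← comp_assoc, hgf, zero_comp, sub_zero]
  have hker : ker g ≤ ker h := by
    rintro b hb
    obtain ⟨a, rfl⟩ : b ∈ range f := hfg ▸ hb
    simp [h, ← comp_apply f' f, hf']
  refine ⟨(ker g).liftQ h hker ∘ₗ (g.quotKerEquivOfSurjective hg).symm, ext fun c => ?_⟩
  obtain ⟨b, rfl⟩ := hg c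
  simpa using congrArg (· b) hgh

section Torsion
variable {R : Type u} [CommRing R] (S : Submonoid R) {s : R}

lemma IsUSTorsionMod.of_comp_eq_smul_id (hs : s ∈ S) {Z W : ModuleCat.{u} R} (α : Z ⟶ W)
    (β : W ⟶ Z) (h : α ≫ β = s • 𝟙 Z) (hW : IsUSTorsionMod S W) : IsUSTorsionMod S Z := by
  obtain ⟨t, ht, htW⟩ := hW
  refine ⟨t * s, S.mul_mem ht hs, fun z => ?_⟩
  have hz : s • z = β (α z) := by
    rw [← ModuleCat.comp_apply, h]
    rfl
  rw [mul_smul, hz, ← map_smul, htW, map_zero]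

lemma isUSTorsionMod_ext_of_comp_eq_smul_id (hs : s ∈ S) {X Y : ModuleCat.{u} R} (i : X ⟶ Y)
    (p : Y ⟶ X) (h : i ≫ p = s • 𝟙 X) (n : ℕ) (M : ModuleCat.{u} R)
    (hY : IsUSTorsionMod S (ext R n Y M)) : IsUSTorsionMod S (ext R n X M) := by
  unfold ext at hY ⊢
  refine hY.of_comp_eq_smul_id S hs (((Ext R _ n).map p.op).app M)
    (((Ext R _ n).map i.op).app M) ?_
  rw [← NatTrans.comp_app, ← Functor.map_comp, ← op_comp, h, Ext_map_smul, op_id,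
    CategoryTheory.Functor.map_id, NatTrans.id_app]

lemma IsUSProjective.of_comp_eq_smul_id {X Y : Type u} [AddCommGroup X] [Module R X]
    [AddCommGroup Y] [Module R Y] (hs : s ∈ S) (i : X →ₗ[R] Y) (p : Y →ₗ[R] X)
    (h : p ∘ₗ i = s • LinearMap.id) (hY : IsUSProjective S Y) : IsUSProjective S X :=
  fun M => isUSTorsionMod_ext_of_comp_eq_smul_id S hs (ModuleCat.ofHom i) (ModuleCat.ofHom p)
    (ModuleCat.hom_ext h) 1 M (hY M)

end Torsion

theorem uS_projective_of_uS_split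
    {R : Type u} [CommRing R] (S : Submonoid R)
    {A B C : Type u} [AddCommGroup A] [Module R A] [AddCommGroup B] [Module R B]
    [AddCommGroup C] [Module R C]
    (f : A →ₗ[R] B) (g : B →ₗ[R] C)
    (hg : Function.Surjective g)
    (hfg : LinearMap.range f = LinearMap.ker g)
    (hsplit : ∃ s ∈ S, ∃ f' : B →ₗ[R] A, ∀ a : A, f' (f a) = s • a)
    (hB : IsUSProjective S B) :
    IsUSProjective S A ∧ IsUSProjective S C := by
  obtain ⟨s, hs, f', hf'⟩ := hsplit
  have hf'f : f' ∘ₗ f = s • LinearMap.id := LinearMap.ext hf'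
  obtain ⟨q, hgq⟩ := LinearMap.exists_comp_eq_smul_id_of_range_eq_ker hg hfg hf'f
  exact ⟨hB.of_comp_eq_smul_id S hs f f' hf'f, hB.of_comp_eq_smul_id S hs q g hgq⟩
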